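/- On Minkowski space with τ = t, the null distance encodes causality: p ≤ q if and only if d̂_t(p,q) = t(q) − t(p). -/

import Mathlib

noncomputable section

open Set

namespace NullDistMink

variable {n : ℕ}

/-- Minkowski space `𝕄^{n+1} = ℝ × ℝⁿ`. -/
abbrev Mink (n : ℕ) : Type := ℝ × EuclideanSpace ℝ (Fin n)

/-- The Minkowski quadratic form `−dt² + Σ(dxⁱ)²` applied to a vector. -/
def mq (v : Mink n) : ℝ := -v.1 ^ 2 + ‖v.2‖ ^ 2

/-- `v` is a future-pointing causal vector (the zero vector is allowed,
so that trivial curves count as causal). -/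
def FutureVec (v : Mink n) : Prop := mq v ≤ 0 ∧ 0 ≤ v.1

/-- `v` is a past-pointing causal vector. -/
def PastVec (v : Mink n) : Prop := FutureVec (-v)

/-- `γ` is a smooth future-directed causal curve on `[a,b]`. -/
def FutureCausalOn (γ : ℝ → Mink n) (a b : ℝ) : Prop :=
  ContDiffOn ℝ (⊤ : ℕ∞) γ (Icc a b) ∧ ∀ s ∈ Icc a b, FutureVec (derivWithin γ (Icc a b) s)

/-- `γ` is a smooth past-directed causal curve on `[a,b]`. -/
def PastCausalOn (γ : ℝ → Mink n) (a b : ℝ) : Prop :=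
  ContDiffOn ℝ (⊤ : ℕ∞) γ (Icc a b) ∧ ∀ s ∈ Icc a b, PastVec (derivWithin γ (Icc a b) s)

/-- The causal relation `p ≤ q`, i.e. `q ∈ J⁺(p)`. -/
def CausalLE (p q : Mink n) : Prop :=
  ∃ γ a b, a ≤ b ∧ FutureCausalOn γ a b ∧ γ a = p ∧ γ b = q

/-- A piecewise causal structure on the curve `γ : [a,b] → 𝕄^{n+1}`:
break points `s 0 = a < s 1 < ⋯ < s k = b` such that on each subinterval
`γ` is a smooth future or past directed causal curve. -/
structure PWC (γ : ℝ → Mink n) (a b : ℝ) where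
  k : ℕ
  s : ℕ → ℝ
  mono : ∀ i < k, s i < s (i + 1)
  first : s 0 = a
  last : s k = b
  causal : ∀ i < k, FutureCausalOn γ (s i) (s (i + 1)) ∨ PastCausalOn γ (s i) (s (i + 1))

/-- The null length of a piecewise causal curve: the sum of the absolute changes
of `τ` along the causal pieces. -/
def nullLength (τ : Mink n → ℝ) {γ : ℝ → Mink n} {a b : ℝ} (P : PWC γ a b) : ℝ :=
  ∑ i ∈ Finset.range P.k, |τ (γ (P.s (i + 1))) - τ (γ (P.s i))|

/-- The null distance induced by `τ`: the infimum of the null lengths of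
piecewise causal curves from `p` to `q`. -/
def nullDist (τ : Mink n → ℝ) (p q : Mink n) : ℝ :=
  sInf {r | ∃ (γ : ℝ → Mink n) (a b : ℝ) (P : PWC γ a b),
    γ a = p ∧ γ b = q ∧ r = nullLength τ P}

/-! ### Auxiliary lemmas -/

lemma FutureVec.norm_le {v : Mink n} (h : FutureVec v) : ‖v.2‖ ≤ v.1 := by
  obtain ⟨hq, ht⟩ := h
  unfold mq at hq
  nlinarith [norm_nonneg v.2]

lemma future_inner_le (u : EuclideanSpace ℝ (Fin n)) (hu : ‖u‖ ≤ 1)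
    {γ : ℝ → Mink n} {a b : ℝ} (hab : a ≤ b) (h : FutureCausalOn γ a b) :
    (inner ℝ u ((γ b).2 - (γ a).2) : ℝ) ≤ (γ b).1 - (γ a).1 := by
  set L : Mink n →L[ℝ] ℝ :=
    ContinuousLinearMap.fst ℝ ℝ (EuclideanSpace ℝ (Fin n)) -
      (innerSL ℝ u).comp (ContinuousLinearMap.snd ℝ ℝ (EuclideanSpace ℝ (Fin n))) with hLdef
  have hL : ∀ v : Mink n, L v = v.1 - inner ℝ u v.2 := by
    intro v; simp [hLdef]
  have hmono : MonotoneOn (fun s => L (γ s)) (Icc a b) := by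
    apply monotoneOn_of_hasDerivWithinAt_nonneg (convex_Icc a b)
      (f' := fun s => L (derivWithin γ (Icc a b) s))
    · exact L.continuous.comp_continuousOn h.1.continuousOn
    · intro x hx
      have hx' : x ∈ Icc a b := interior_subset hx
      have hdiff : DifferentiableWithinAt ℝ γ (Icc a b) x :=
        (h.1.differentiableOn (by simp)) x hx'
      exact (L.hasFDerivAt.comp_hasDerivWithinAt x hdiff.hasDerivWithinAt).mono interior_subset
    · intro x hx
      have hx' : x ∈ Icc a b := interior_subset hx
      have hv := (h.2 x hx').norm_le
      set v := derivWithin γ (Icc a b) x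
      rw [hL]
      have h1 : (inner ℝ u v.2 : ℝ) ≤ ‖u‖ * ‖v.2‖ := real_inner_le_norm u v.2
      nlinarith [norm_nonneg v.2, norm_nonneg u]
  have h2 := hmono (left_mem_Icc.2 hab) (right_mem_Icc.2 hab) hab
  simp only [hL] at h2
  rw [inner_sub_right]; linarith

lemma past_inner_le (u : EuclideanSpace ℝ (Fin n)) (hu : ‖u‖ ≤ 1)
    {γ : ℝ → Mink n} {a b : ℝ} (hab : a ≤ b) (h : PastCausalOn γ a b) :
    (inner ℝ u ((γ a).2 - (γ b).2) : ℝ) ≤ (γ a).1 - (γ b).1 := by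
  rcases eq_or_lt_of_le hab with rfl | hlt
  · simp
  · have hfut : FutureCausalOn (fun s => -γ s) a b := by
      refine ⟨h.1.neg, fun s hs => ?_⟩
      have hud : UniqueDiffWithinAt ℝ (Icc a b) s := (uniqueDiffOn_Icc hlt) s hs
      rw [show (fun s => -γ s) = -γ from rfl, derivWithin.neg]
      exact h.2 s hs
    have := future_inner_le u hu hab hfut
    simp only [Prod.fst_neg, Prod.snd_neg, inner_sub_right, inner_neg_right] at this ⊢
    linarith

lemma piece_bound (u : EuclideanSpace ℝ (Fin n)) (hu : ‖u‖ ≤ 1)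
    {γ : ℝ → Mink n} {a b : ℝ} (hab : a ≤ b)
    (h : FutureCausalOn γ a b ∨ PastCausalOn γ a b) :
    |(inner ℝ u ((γ b).2 - (γ a).2) : ℝ)| ≤ |(γ b).1 - (γ a).1| := by
  have hnu : ‖-u‖ ≤ 1 := by rwa [norm_neg]
  rcases h with h | h
  · have h1 := future_inner_le u hu hab h
    have h2 := future_inner_le (-u) hnu hab h
    rw [inner_neg_left] at h2
    have h0 : (0:ℝ) ≤ (γ b).1 - (γ a).1 := by
      have := future_inner_le 0 (by simp) hab h
      simpa using this
    rw [abs_of_nonneg h0]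
    exact abs_le.2 ⟨by linarith, h1⟩
  · have h1 := past_inner_le u hu hab h
    have h2 := past_inner_le (-u) hnu hab h
    rw [inner_neg_left] at h2
    have h0 : (0:ℝ) ≤ (γ a).1 - (γ b).1 := by
      have := past_inner_le 0 (by simp) hab h
      simpa using this
    rw [abs_sub_comm, abs_of_nonneg h0]
    rw [show ((γ b).2 - (γ a).2) = -((γ a).2 - (γ b).2) by abel, inner_neg_right, abs_neg]
    exact abs_le.2 ⟨by linarith, h1⟩

lemma nullLength_nonneg (τ : Mink n → ℝ) {γ : ℝ → Mink n} {a b : ℝ} (P : PWC γ a b) :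
    0 ≤ nullLength τ P :=
  Finset.sum_nonneg fun _ _ => abs_nonneg _

lemma nullLength_ge_time {γ : ℝ → Mink n} {a b : ℝ} (P : PWC γ a b) :
    |(γ b).1 - (γ a).1| ≤ nullLength (fun x => x.1) P := by
  unfold nullLength
  have key : (γ b).1 - (γ a).1
      = ∑ i ∈ Finset.range P.k, ((γ (P.s (i + 1))).1 - (γ (P.s i)).1) := by
    rw [Finset.sum_range_sub (fun i => (γ (P.s i)).1), P.first, P.last]
  rw [key]
  exact Finset.abs_sum_le_sum_abs _ _

lemma nullLength_ge_space (u : EuclideanSpace ℝ (Fin n)) (hu : ‖u‖ ≤ 1)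
    {γ : ℝ → Mink n} {a b : ℝ} (P : PWC γ a b) :
    |(inner ℝ u ((γ b).2 - (γ a).2) : ℝ)| ≤ nullLength (fun x => x.1) P := by
  unfold nullLength
  have key : (inner ℝ u ((γ b).2 - (γ a).2) : ℝ)
      = ∑ i ∈ Finset.range P.k, (inner ℝ u ((γ (P.s (i + 1))).2 - (γ (P.s i)).2) : ℝ) := by
    simp only [inner_sub_right]
    rw [Finset.sum_range_sub (fun i => (inner ℝ u ((γ (P.s i)).2) : ℝ)), P.first, P.last]
  rw [key]
  refine (Finset.abs_sum_le_sum_abs _ _).trans (Finset.sum_le_sum ?_)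
  intro i hi
  exact piece_bound u hu (le_of_lt (P.mono i (Finset.mem_range.1 hi)))
    (P.causal i (Finset.mem_range.1 hi))

lemma lin_FutureCausalOn {p v : Mink n} (hv : FutureVec v) {a b : ℝ} (hab : a < b)
    {γ : ℝ → Mink n} (hEq : EqOn γ (fun s => p + s • v) (Icc a b)) :
    FutureCausalOn γ a b := by
  have hcd : ContDiff ℝ (⊤ : ℕ∞) (fun s : ℝ => p + s • v) :=
    contDiff_const.add (contDiff_id.smul contDiff_const)
  refine ⟨hcd.contDiffOn.congr hEq, fun s hs => ?_⟩
  have hder : HasDerivWithinAt (fun s : ℝ => p + s • v) v (Icc a b) s := by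
    simpa using (((hasDerivAt_id s).smul_const v).const_add p).hasDerivWithinAt
  have : derivWithin γ (Icc a b) s = v := by
    rw [derivWithin_congr hEq (hEq hs)]
    exact hder.derivWithin ((uniqueDiffOn_Icc hab) s hs)
  rw [this]; exact hv

lemma lin_PastCausalOn {p v : Mink n} (hv : PastVec v) {a b : ℝ} (hab : a < b)
    {γ : ℝ → Mink n} (hEq : EqOn γ (fun s => p + s • v) (Icc a b)) :
    PastCausalOn γ a b := by
  have hcd : ContDiff ℝ (⊤ : ℕ∞) (fun s : ℝ => p + s • v) :=
    contDiff_const.add (contDiff_id.smul contDiff_const)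
  refine ⟨hcd.contDiffOn.congr hEq, fun s hs => ?_⟩
  have hder : HasDerivWithinAt (fun s : ℝ => p + s • v) v (Icc a b) s := by
    simpa using (((hasDerivAt_id s).smul_const v).const_add p).hasDerivWithinAt
  have : derivWithin γ (Icc a b) s = v := by
    rw [derivWithin_congr hEq (hEq hs)]
    exact hder.derivWithin ((uniqueDiffOn_Icc hab) s hs)
  rw [this]; exact hv

lemma set_nonempty (p q : Mink n) :
    {r | ∃ (γ : ℝ → Mink n) (a b : ℝ) (P : PWC γ a b),
      γ a = p ∧ γ b = q ∧ r = nullLength (fun x => x.1) P}.Nonempty := by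
  classical
  set T : ℝ := max p.1 q.1 + ‖q.2 - p.2‖ with hT
  set r : Mink n := (T, q.2) with hr
  have hT1 : ‖q.2 - p.2‖ ≤ T - p.1 := by
    have := le_max_left p.1 q.1; rw [hT]; linarith
  have hT2 : (0:ℝ) ≤ T - q.1 := by
    have h1 := le_max_right p.1 q.1
    have h2 := norm_nonneg (q.2 - p.2); rw [hT]; linarith
  set γ : ℝ → Mink n :=
    (fun s => if s ≤ 1 then p + s • (r - p) else r + (s - 1) • (q - r)) with hγ
  have h1 : EqOn γ (fun s => p + s • (r - p)) (Icc (0:ℝ) 1) := fun s hs => if_pos hs.2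
  have h2 : EqOn γ (fun s => (r - (q - r)) + s • (q - r)) (Icc (1:ℝ) 2) := by
    intro s hs
    rcases le_or_gt s 1 with hs1 | hs1
    · have hseq : s = 1 := le_antisymm hs1 hs.1
      subst hseq
      show (if (1:ℝ) ≤ 1 then p + (1:ℝ) • (r - p) else _) = _
      rw [if_pos le_rfl]
      simp
    · show (if s ≤ 1 then _ else r + (s - 1) • (q - r)) = _
      rw [if_neg (not_le.2 hs1), sub_smul, one_smul]
      abel
  have hfv : FutureVec (r - p) := by
    constructor
    · unfold mq
      have e1 : (r - p).1 = T - p.1 := rfl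
      have e2 : (r - p).2 = q.2 - p.2 := rfl
      rw [e1, e2]
      nlinarith [norm_nonneg (q.2 - p.2)]
    · show (0:ℝ) ≤ T - p.1
      have := norm_nonneg (q.2 - p.2); linarith
  have hpv : PastVec (q - r) := by
    constructor
    · unfold mq
      have e1 : (-(q - r)).1 = T - q.1 := by
        show -(q.1 - T) = T - q.1; ring
      have e2 : (-(q - r)).2 = 0 := by
        show -(q.2 - q.2) = 0; simp
      rw [e1, e2]
      simp
      nlinarith
    · show (0:ℝ) ≤ -(q.1 - T); linarith
  have hγ0 : γ 0 = p := by
    rw [hγ]; simp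
  have hγ2 : γ 2 = q := by
    rw [hγ]; norm_num
  refine ⟨_, γ, 0, 2, ?_, hγ0, hγ2, rfl⟩
  refine ⟨2, fun i => (i : ℝ), ?_, by norm_num, by norm_num, ?_⟩
  · intro i _; push_cast; linarith
  · intro i hi
    interval_cases i
    · left
      refine lin_FutureCausalOn (p := p) (v := r - p) hfv (by norm_num) ?_
      intro s hs
      refine h1 ?_
      simpa using hs
    · right
      refine lin_PastCausalOn (p := r - (q - r)) (v := q - r) hpv (by norm_num) ?_
      intro s hs
      refine h2 ?_
      simpa using hs

/-- On Minkowski space with `τ = t`, the null distance encodes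
causality: `p ≤ q` iff `d̂_t(p,q) = t(q) − t(p)`. -/
theorem nullDist_encodes_causality_minkowski (n : ℕ) (p q : Mink n) :
    CausalLE p q ↔ nullDist (fun x => x.1) p q = q.1 - p.1 := by
  classical
  set S : Set ℝ := {r | ∃ (γ : ℝ → Mink n) (a b : ℝ) (P : PWC γ a b),
    γ a = p ∧ γ b = q ∧ r = nullLength (fun x => x.1) P} with hS
  have hSd : nullDist (fun x : Mink n => x.1) p q = sInf S := rfl
  have hne : S.Nonempty := set_nonempty p q
  have hbdd : BddBelow S := by
    refine ⟨0, ?_⟩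
    rintro x ⟨γ, a, b, P, _, _, rfl⟩
    exact nullLength_nonneg _ P
  have hlow1 : |q.1 - p.1| ≤ sInf S := by
    apply le_csInf hne
    rintro x ⟨γ, a, b, P, hpa, hqb, rfl⟩
    have := nullLength_ge_time P
    rwa [hpa, hqb] at this
  have hlow2 : ∀ u : EuclideanSpace ℝ (Fin n), ‖u‖ ≤ 1 →
      |(inner ℝ u (q.2 - p.2) : ℝ)| ≤ sInf S := by
    intro u hu
    apply le_csInf hne
    rintro x ⟨γ, a, b, P, hpa, hqb, rfl⟩
    have := nullLength_ge_space u hu P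
    rwa [hpa, hqb] at this
  rw [hSd]
  constructor
  · rintro ⟨γ, a, b, hab, hcaus, hpa, hqb⟩
    have ht : 0 ≤ q.1 - p.1 := by
      have := future_inner_le (0 : EuclideanSpace ℝ (Fin n)) (by simp) hab hcaus
      rw [hpa, hqb] at this; simpa using this
    have hmem : (q.1 - p.1) ∈ S := by
      rcases eq_or_lt_of_le hab with rfl | hlt
      · have hpq : p = q := by rw [← hpa, ← hqb]
        refine ⟨γ, a, a, ⟨0, fun _ => a, by simp, rfl, rfl, by simp⟩, hpa, hqb, ?_⟩
        rw [← hpq]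
        simp [nullLength]
      · refine ⟨γ, a, b, ⟨1, fun i => if i = 0 then a else b, ?_, by simp, by simp, ?_⟩,
          hpa, hqb, ?_⟩
        · intro i hi; interval_cases i; simpa
        · intro i hi; interval_cases i
          simp only [if_pos rfl, if_neg one_ne_zero]
          exact Or.inl hcaus
        · simp [nullLength, hpa, hqb]
          rw [abs_of_nonneg ht]
    have hle := csInf_le hbdd hmem
    have hge := le_trans (le_abs_self _) hlow1
    linarith
  · intro hval
    have ht : 0 ≤ q.1 - p.1 := le_trans (abs_nonneg _) (hval ▸ hlow1)
    have hsx : ‖q.2 - p.2‖ ≤ q.1 - p.1 := by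
      rcases eq_or_ne q.2 p.2 with he | he
      · simp [he, ht]
      · set d := q.2 - p.2 with hd
        have hdne : d ≠ 0 := sub_ne_zero.2 he
        have hnd : ‖d‖ ≠ 0 := norm_ne_zero_iff.2 hdne
        have hu : ‖(‖d‖⁻¹ • d : EuclideanSpace ℝ (Fin n))‖ ≤ 1 := by
          rw [norm_smul, norm_inv, norm_norm, inv_mul_cancel₀ hnd]
        have h2 := hlow2 _ hu
        rw [hval] at h2
        have hinner : (inner ℝ (‖d‖⁻¹ • d) d : ℝ) = ‖d‖ := by
          rw [real_inner_smul_left, real_inner_self_eq_norm_sq]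
          field_simp
        rw [hinner, abs_of_nonneg (norm_nonneg d)] at h2
        exact h2
    have hfv : FutureVec (q - p) := by
      constructor
      · unfold mq
        have e1 : (q - p).1 = q.1 - p.1 := rfl
        have e2 : (q - p).2 = q.2 - p.2 := rfl
        rw [e1, e2]
        nlinarith [norm_nonneg (q.2 - p.2)]
      · exact ht
    refine ⟨fun s => p + s • (q - p), 0, 1, zero_le_one,
      lin_FutureCausalOn hfv zero_lt_one (fun s _ => rfl), by simp, by simp⟩

end NullDistMink
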